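/- Under the standing assumptions on A, F, h, g, fix λ ∈ ℝ^N and let v^λ(x,t) := inf_{α ∈ 𝒜} λ·C_{x,t}[α]. Then v^λ is a viscosity subsolution of v_t + H^λ(x, Dv) = 0 in ℝ^n × (0,T), where H^λ(x,p) := min_{a ∈ A} { F(x,a)·p + λ·h(x,a) }. That is: whenever ψ : ℝ^n × ℝ → ℝ is twice continuously differentiable, (x₀,t₀) ∈ ℝ^n × (0,T), and v^λ − ψ ≤ 0 = (v^λ − ψ)(x₀,t₀) on some ball around (x₀,t₀), then ∂_t ψ(x₀,t₀) + min_{a ∈ A} { F(x₀,a)·D_x ψ(x₀,t₀) + λ·h(x₀,a) } ≥ 0. -/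

import Mathlib

open MeasureTheory Set
open scoped InnerProductSpace

noncomputable section

/-- Admissible controls: measurable maps taking values in `A` a.e. on `(0,T)`. -/
def IsAdmissible {m : ℕ} (T : ℝ) (A : Set (EuclideanSpace ℝ (Fin m)))
    (α : ℝ → EuclideanSpace ℝ (Fin m)) : Prop :=
  Measurable α ∧ ∀ᵐ s ∂(volume.restrict (Set.Ioo 0 T)), α s ∈ A

/-- `χ` is the controlled trajectory on `[t,T]` started at `x` with control `α`:
a continuous solution of the integral equation `χ(s) = x + ∫_t^s F(χ(r), α(r)) dr`. -/
def IsTrajectory {n m : ℕ} (T : ℝ)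
    (F : EuclideanSpace ℝ (Fin n) → EuclideanSpace ℝ (Fin m) → EuclideanSpace ℝ (Fin n))
    (x : EuclideanSpace ℝ (Fin n)) (t : ℝ) (α : ℝ → EuclideanSpace ℝ (Fin m))
    (χ : ℝ → EuclideanSpace ℝ (Fin n)) : Prop :=
  ContinuousOn χ (Set.Icc t T) ∧
    ∀ s ∈ Set.Icc t T, χ s = x + ∫ r in t..s, F (χ r) (α r)

/-- The vectorial cost `C_{x,t}[α] = g(χ(T)) + ∫_t^T h(χ(s), α(s)) ds`. -/
def vectCost {n m N : ℕ} (T : ℝ)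
    (h : EuclideanSpace ℝ (Fin n) → EuclideanSpace ℝ (Fin m) → EuclideanSpace ℝ (Fin N))
    (g : EuclideanSpace ℝ (Fin n) → EuclideanSpace ℝ (Fin N))
    (t : ℝ) (α : ℝ → EuclideanSpace ℝ (Fin m)) (χ : ℝ → EuclideanSpace ℝ (Fin n)) :
    EuclideanSpace ℝ (Fin N) :=
  g (χ T) + ∫ s in t..T, h (χ s) (α s)

/-- The scalar value function `v^λ(x,t) = inf_{α ∈ 𝒜} λ·C_{x,t}[α]`, the infimum being
taken over admissible controls and associated trajectories. -/
def scalarValue {n m N : ℕ} (T : ℝ) (A : Set (EuclideanSpace ℝ (Fin m)))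
    (F : EuclideanSpace ℝ (Fin n) → EuclideanSpace ℝ (Fin m) → EuclideanSpace ℝ (Fin n))
    (h : EuclideanSpace ℝ (Fin n) → EuclideanSpace ℝ (Fin m) → EuclideanSpace ℝ (Fin N))
    (g : EuclideanSpace ℝ (Fin n) → EuclideanSpace ℝ (Fin N))
    (lam : EuclideanSpace ℝ (Fin N))
    (x : EuclideanSpace ℝ (Fin n)) (t : ℝ) : ℝ :=
  sInf {r : ℝ | ∃ (α : ℝ → EuclideanSpace ℝ (Fin m)) (χ : ℝ → EuclideanSpace ℝ (Fin n)),
    IsAdmissible T A α ∧ IsTrajectory T F x t α χ ∧ r = ⟪lam, vectCost T h g t α χ⟫_ℝ}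

/-! Fix `a ∈ A` and let `χ` follow the constant control `a` from `(x₀, t₀)`. Concatenating this
control on `[t₀, s]` with an almost optimal control from `(χ s, s)` gives the dynamic programming
inequality `v(x₀, t₀) ≤ ∫_{t₀}^s λ·h(χ, a) + v(χ s, s)`. Since `v ≤ ψ` near `(x₀, t₀)` with equality
there, `s ↦ ∫_{t₀}^s λ·h(χ, a) + ψ(χ s, s)` attains a one-sided minimum at `t₀`, so its right
derivative `∂ₜψ + F(x₀, a)·Dₓψ + λ·h(x₀, a)` is nonnegative. Minimising over `a` gives the claim. -/

open Topology intervalIntegral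
open scoped NNReal

theorem aestronglyMeasurable_comp_of_continuousOn_prod
    {Ω X Y Z : Type*} [MeasurableSpace Ω] {μ : Measure Ω}
    [TopologicalSpace X] [MeasurableSpace X] [BorelSpace X] [SecondCountableTopology X]
    [TopologicalSpace Y] [MeasurableSpace Y] [BorelSpace Y] [SecondCountableTopology Y]
    [TopologicalSpace Z] [TopologicalSpace.PseudoMetrizableSpace Z] [SecondCountableTopology Z]
    [MeasurableSpace Z] [BorelSpace Z]
    {G : X → Y → Z} {A : Set Y} (hA : MeasurableSet A)
    (hG : ContinuousOn (fun p => G p.1 p.2) (univ ×ˢ A))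
    {χ : Ω → X} {α : Ω → Y} (hχ : AEMeasurable χ μ) (hα : AEMeasurable α μ)
    (hmem : ∀ᵐ u ∂μ, α u ∈ A) :
    AEStronglyMeasurable (fun u => G (χ u) (α u)) μ := by
  have hpair : AEMeasurable (fun u => (χ u, α u)) μ := hχ.prodMk hα
  have hS : MeasurableSet ((univ : Set X) ×ˢ A) := MeasurableSet.univ.prod hA
  have hG' := hG.aemeasurable (μ := μ.map fun u => (χ u, α u)) hS
  have hae : ∀ᵐ p ∂μ.map (fun u => (χ u, α u)), p ∈ (univ : Set X) ×ˢ A :=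
    (ae_map_iff hpair hS).2 <| hmem.mono fun _ hu => ⟨mem_univ _, hu⟩
  rw [Measure.restrict_eq_self_of_ae_mem hae] at hG'
  exact (hG'.comp_aemeasurable hpair).aestronglyMeasurable

theorem intervalIntegrable_comp_of_continuousOn_prod
    {X Y E : Type*}
    [TopologicalSpace X] [MeasurableSpace X] [BorelSpace X] [SecondCountableTopology X]
    [TopologicalSpace Y] [MeasurableSpace Y] [BorelSpace Y] [SecondCountableTopology Y]
    [NormedAddCommGroup E] [SecondCountableTopology E] [MeasurableSpace E] [BorelSpace E]
    {G : X → Y → E} {A : Set Y} (hA : MeasurableSet A)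
    (hG : ContinuousOn (fun p => G p.1 p.2) (univ ×ˢ A)) {C : ℝ} (hbd : ∀ x, ∀ a ∈ A, ‖G x a‖ ≤ C)
    {χ : ℝ → X} {α : ℝ → Y} {p q : ℝ} (hχ : ContinuousOn χ (uIcc p q)) (hα : Measurable α)
    (hmem : ∀ᵐ u, u ∈ uIoc p q → α u ∈ A) :
    IntervalIntegrable (fun u => G (χ u) (α u)) volume p q := by
  have hmem' : ∀ᵐ u ∂volume.restrict (uIoc p q), α u ∈ A :=
    (ae_restrict_iff' measurableSet_uIoc).2 hmem
  rw [intervalIntegrable_iff]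
  refine Integrable.mono' (integrableOn_const measure_Ioc_lt_top.ne) ?_
    (hmem'.mono fun u hu => hbd _ _ hu)
  exact aestronglyMeasurable_comp_of_continuousOn_prod hA hG
    ((hχ.mono uIoc_subset_uIcc).aemeasurable measurableSet_uIoc) hα.aemeasurable hmem'

section Piecewise

variable {E : Type*} {f g : ℝ → E} {a b c : ℝ}

theorem eqOn_piecewise_Iio_left (hab : a ≤ b) : EqOn ((Iio b).piecewise f g) f (uIoo a b) :=
  (piecewise_eqOn _ f g).mono fun _ hu => (uIoo_of_le hab ▸ hu).2

theorem eqOn_piecewise_Iio_right (hbc : b ≤ c) : EqOn ((Iio b).piecewise f g) g (uIcc b c) :=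
  (piecewise_eqOn_compl _ f g).mono fun _ hu => not_lt.2 (uIcc_of_le hbc ▸ hu).1

theorem IntervalIntegrable.piecewise_Iio [NormedAddCommGroup E] (hab : a ≤ b) (hbc : b ≤ c)
    (hf : IntervalIntegrable f volume a b) (hg : IntervalIntegrable g volume b c) :
    IntervalIntegrable ((Iio b).piecewise f g) volume a c :=
  (hf.congr_uIoo (eqOn_piecewise_Iio_left hab).symm).trans
    (hg.congr ((eqOn_piecewise_Iio_right hbc).symm.mono uIoc_subset_uIcc))

theorem integral_piecewise_Iio [NormedAddCommGroup E] [NormedSpace ℝ E] (hab : a ≤ b) (hbc : b ≤ c)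
    (hf : IntervalIntegrable f volume a b) (hg : IntervalIntegrable g volume b c) :
    ∫ u in a..c, (Iio b).piecewise f g u = (∫ u in a..b, f u) + ∫ u in b..c, g u := by
  rw [← integral_add_adjacent_intervals (b := b)
      (hf.congr_uIoo (eqOn_piecewise_Iio_left hab).symm)
      (hg.congr ((eqOn_piecewise_Iio_right hbc).symm.mono uIoc_subset_uIcc)),
    integral_congr_uIoo (eqOn_piecewise_Iio_left hab),
    integral_congr (eqOn_piecewise_Iio_right hbc)]

end Piecewise

theorem fderiv_apply_eq_inner_gradient_add_deriv {E : Type*} [NormedAddCommGroup E]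
    [InnerProductSpace ℝ E] [CompleteSpace E] {ψ : E × ℝ → ℝ} {x : E} {t : ℝ}
    (hψ : DifferentiableAt ℝ ψ (x, t)) (v : E) :
    fderiv ℝ ψ (x, t) (v, 1) =
      ⟪v, gradient (fun y => ψ (y, t)) x⟫_ℝ + deriv (fun τ => ψ (x, τ)) t := by
  have hx : HasFDerivAt (fun y => ψ (y, t)) ((fderiv ℝ ψ (x, t)).comp (.inl ℝ E ℝ)) x :=
    hψ.hasFDerivAt.comp x (hasFDerivAt_prodMk_left x t)
  have ht : HasDerivAt (fun τ => ψ (x, τ)) (fderiv ℝ ψ (x, t) (0, 1)) t :=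
    hψ.hasFDerivAt.comp_hasDerivAt t ((hasDerivAt_const t x).prodMk (hasDerivAt_id t))
  rw [ht.deriv, hx.hasGradientAt.gradient, real_inner_comm, InnerProductSpace.toDual_symm_apply,
    ContinuousLinearMap.comp_apply, ContinuousLinearMap.inl_apply, ← map_add, Prod.mk_add_mk,
    add_zero, zero_add]

theorem IsLocalMinOn.hasDerivWithinAt_Icc_nonneg {f : ℝ → ℝ} {f' a b : ℝ} (hab : a < b)
    (hmin : IsLocalMinOn f (Icc a b) a) (hf : HasDerivWithinAt f f' (Icc a b) a) : 0 ≤ f' := by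
  have hcone : b - a ∈ posTangentConeAt (Icc a b) a :=
    mem_posTangentConeAt_of_segment_subset (by rw [add_sub_cancel, segment_eq_Icc hab.le])
  have := hmin.hasFDerivWithinAt_nonneg hf hcone
  rw [ContinuousLinearMap.toSpanSingleton_apply, smul_eq_mul] at this
  exact nonneg_of_mul_nonneg_right this (sub_pos.2 hab)

theorem hasDerivWithinAt_integral_add_comp_prodMk {E : Type*} [NormedAddCommGroup E]
    [NormedSpace ℝ E] {q : ℝ → ℝ} {χ : ℝ → E} {ψ : E × ℝ → ℝ} {v : E} {t T : ℝ} (htT : t ≤ T)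
    (hq : ContinuousOn q (Icc t T)) (hχ : HasDerivWithinAt χ v (Icc t T) t)
    (hψ : DifferentiableAt ℝ ψ (χ t, t)) :
    HasDerivWithinAt (fun s => (∫ u in t..s, q u) + ψ (χ s, s))
      (q t + fderiv ℝ ψ (χ t, t) (v, 1)) (Icc t T) t := by
  have : Fact (t ∈ Icc t T) := ⟨left_mem_Icc.2 htT⟩
  exact (integral_hasDerivWithinAt_right (s := Icc t T) (IntervalIntegrable.refl (a := t))
    (hq.stronglyMeasurableAtFilter_nhdsWithin measurableSet_Icc t) (hq t this.out)).add
    (hψ.hasFDerivAt.comp_hasDerivWithinAt (f := fun s => (χ s, s)) t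
      (hχ.prodMk (hasDerivWithinAt_id t _)))

theorem exists_hasDerivWithinAt_Icc_of_lipschitzWith {E : Type*} [NormedAddCommGroup E]
    [NormedSpace ℝ E] [CompleteSpace E] {f : E → E} {K L : ℝ≥0} (hf : LipschitzWith K f)
    (hbd : ∀ x, ‖f x‖ ≤ L) (x : E) {t T : ℝ} (htT : t ≤ T) :
    ∃ χ : ℝ → E, χ t = x ∧ ∀ s ∈ Icc t T, HasDerivWithinAt χ (f (χ s)) (Icc t T) s :=
  IsPicardLindelof.exists_eq_forall_mem_Icc_hasDerivWithinAt₀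
    (IsPicardLindelof.of_time_independent (t₀ := ⟨t, left_mem_Icc.2 htT⟩) (x₀ := x)
      (a := L * (T - t).toNNReal) (fun y _ => hbd y) hf.lipschitzOnWith
      (by simp [htT, Real.coe_toNNReal _ (sub_nonneg.2 htT)]))

section ControlProblem

variable {n m N : ℕ} {T C : ℝ} {A : Set (EuclideanSpace ℝ (Fin m))}
  {F : EuclideanSpace ℝ (Fin n) → EuclideanSpace ℝ (Fin m) → EuclideanSpace ℝ (Fin n)}
  {h : EuclideanSpace ℝ (Fin n) → EuclideanSpace ℝ (Fin m) → EuclideanSpace ℝ (Fin N)}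
  {g : EuclideanSpace ℝ (Fin n) → EuclideanSpace ℝ (Fin N)}
  {x : EuclideanSpace ℝ (Fin n)} {t s : ℝ} {a : EuclideanSpace ℝ (Fin m)}
  {α α' : ℝ → EuclideanSpace ℝ (Fin m)} {χ χ' : ℝ → EuclideanSpace ℝ (Fin n)}

theorem isAdmissible_const (ha : a ∈ A) : IsAdmissible T A (fun _ => a) :=
  ⟨measurable_const, .of_forall fun _ => ha⟩

theorem IsAdmissible.piecewise_Iio (hα : IsAdmissible T A α) (hα' : IsAdmissible T A α') :
    IsAdmissible T A ((Iio s).piecewise α α') := by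
  refine ⟨hα.1.piecewise measurableSet_Iio hα'.1, ?_⟩
  filter_upwards [hα.2, hα'.2] with u hu hu'
  by_cases hus : u ∈ Iio s
  · rwa [piecewise_eq_of_mem _ _ _ hus]
  · rwa [piecewise_eq_of_notMem _ _ _ hus]

theorem IsAdmissible.ae_mem_uIoc (hα : IsAdmissible T A α) (ht : 0 ≤ t) (htT : t ≤ T) :
    ∀ᵐ u, u ∈ uIoc t T → α u ∈ A := by
  filter_upwards [(ae_restrict_iff' measurableSet_Ioo).1 hα.2, Measure.ae_ne volume T]
    with u hu huT hmem
  rw [uIoc_of_le htT] at hmem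
  exact hu ⟨ht.trans_lt hmem.1, hmem.2.lt_of_ne huT⟩

theorem IsTrajectory.apply_left (hχ : IsTrajectory T F x t α χ) (htT : t ≤ T) : χ t = x := by
  simpa using hχ.2 t (left_mem_Icc.2 htT)

theorem IsTrajectory.intervalIntegrable_comp {E : Type*} [NormedAddCommGroup E]
    [SecondCountableTopology E] [MeasurableSpace E] [BorelSpace E]
    (hχ : IsTrajectory T F x t α χ) (hα : IsAdmissible T A α) (ht : 0 ≤ t) (htT : t ≤ T)
    (hA : IsClosed A) {G : EuclideanSpace ℝ (Fin n) → EuclideanSpace ℝ (Fin m) → E}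
    (hG : ContinuousOn (fun p => G p.1 p.2) (univ ×ˢ A)) (hbd : ∀ x, ∀ a ∈ A, ‖G x a‖ ≤ C) :
    IntervalIntegrable (fun u => G (χ u) (α u)) volume t T :=
  intervalIntegrable_comp_of_continuousOn_prod hA.measurableSet hG hbd
    (uIcc_of_le htT ▸ hχ.1) hα.1 (hα.ae_mem_uIoc ht htT)

theorem exists_isTrajectory_const (hFbd : ∀ x, ∀ a ∈ A, ‖F x a‖ ≤ C)
    (hFlip : ∀ x y, ∀ a ∈ A, ‖F x a - F y a‖ ≤ C * ‖x - y‖) (ha : a ∈ A)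
    (x : EuclideanSpace ℝ (Fin n)) (htT : t ≤ T) :
    ∃ χ, IsTrajectory T F x t (fun _ => a) χ ∧ HasDerivWithinAt χ (F x a) (Icc t T) t := by
  have hlip : LipschitzWith C.toNNReal (F · a) := LipschitzWith.of_dist_le_mul fun y z => by
    rw [dist_eq_norm, dist_eq_norm]
    exact (hFlip y z a ha).trans (by gcongr; exact Real.le_coe_toNNReal C)
  obtain ⟨χ, hχt, hχ⟩ := exists_hasDerivWithinAt_Icc_of_lipschitzWith hlip
    (fun y => (hFbd y a ha).trans (Real.le_coe_toNNReal C)) x htT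
  refine ⟨χ, ⟨HasDerivWithinAt.continuousOn hχ, fun s hs => ?_⟩, ?_⟩
  · have hsub : uIcc t s ⊆ Icc t T := uIcc_of_le hs.1 ▸ Icc_subset_Icc_right hs.2
    rw [← ODE.picard_eq_of_hasDerivAt (f := fun _ y => F y a) (u := univ)
      (hlip.continuous.comp continuous_snd).continuousOn
      (fun r hr => (hχ r (hsub hr)).mono hsub) (mapsTo_univ _ _), ODE.picard_apply, hχt]
  · rw [← hχt]
    exact hχ t (left_mem_Icc.2 htT)

theorem IsTrajectory.piecewise_Iio (hχ : IsTrajectory T F x t α χ)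
    (hχ' : IsTrajectory T F (χ s) s α' χ') (hts : t ≤ s) (hsT : s ≤ T)
    (hF : IntervalIntegrable (fun u => F (χ u) (α u)) volume t s)
    (hF' : IntervalIntegrable (fun u => F (χ' u) (α' u)) volume s T) :
    IsTrajectory T F x t ((Iio s).piecewise α α') ((Iio s).piecewise χ χ') := by
  have hcomp : (fun u => F ((Iio s).piecewise χ χ' u) ((Iio s).piecewise α α' u)) =
      (Iio s).piecewise (fun u => F (χ u) (α u)) (fun u => F (χ' u) (α' u)) :=
    ((Iio s).piecewise_op₂ (f := χ) (g := χ') α α' fun _ => F).symm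
  have heq : ∀ r ∈ Icc t T, (Iio s).piecewise χ χ' r =
      x + ∫ u in t..r, F ((Iio s).piecewise χ χ' u) ((Iio s).piecewise α α' u) := by
    intro r hr
    rw [hcomp]
    rcases lt_or_ge r s with hrs | hrs
    · rw [piecewise_eq_of_mem (Iio s) χ χ' hrs, hχ.2 r ⟨hr.1, hrs.le.trans hsT⟩,
        integral_congr ((piecewise_eqOn (Iio s) _ _).mono fun u hu => ?_)]
      exact ((uIcc_of_le hr.1 ▸ hu).2.trans_lt hrs)
    · rw [piecewise_eq_of_notMem (Iio s) χ χ' (not_lt.2 hrs), hχ'.2 r ⟨hrs, hr.2⟩,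
        integral_piecewise_Iio hts hrs hF
          (hF'.mono_set (uIcc_subset_uIcc left_mem_uIcc (mem_uIcc_of_le hrs hr.2))),
        hχ.2 s ⟨hts, hsT⟩, add_assoc]
  refine ⟨ContinuousOn.congr ?_ heq, heq⟩
  have hint := hcomp ▸ hF.piecewise_Iio hts hsT hF'
  exact uIcc_of_le (hts.trans hsT) ▸
    (continuousOn_primitive_interval' hint left_mem_uIcc).const_add x

theorem vectCost_piecewise_Iio (hts : t ≤ s) (hsT : s ≤ T)
    (hh : IntervalIntegrable (fun u => h (χ u) (α u)) volume t s)
    (hh' : IntervalIntegrable (fun u => h (χ' u) (α' u)) volume s T) :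
    vectCost T h g t ((Iio s).piecewise α α') ((Iio s).piecewise χ χ') =
      (∫ u in t..s, h (χ u) (α u)) + vectCost T h g s α' χ' := by
  have hcomp : (fun u => h ((Iio s).piecewise χ χ' u) ((Iio s).piecewise α α' u)) =
      (Iio s).piecewise (fun u => h (χ u) (α u)) (fun u => h (χ' u) (α' u)) :=
    ((Iio s).piecewise_op₂ (f := χ) (g := χ') α α' fun _ => h).symm
  rw [vectCost, vectCost, hcomp, integral_piecewise_Iio hts hsT hh hh',
    piecewise_eq_of_notMem (Iio s) χ χ' (not_lt.2 hsT)]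
  abel

theorem norm_vectCost_le (hhbd : ∀ x, ∀ a ∈ A, ‖h x a‖ ≤ C) (hgbd : ∀ x, ‖g x‖ ≤ C)
    (hα : IsAdmissible T A α) (ht : 0 ≤ t) (htT : t ≤ T) :
    ‖vectCost T h g t α χ‖ ≤ C + C * (T - t) := by
  refine (norm_add_le _ _).trans (add_le_add (hgbd _) ?_)
  have := norm_integral_le_of_norm_le_const_ae <|
    (hα.ae_mem_uIoc ht htT).mono fun u hu hmem => hhbd (χ u) _ (hu hmem)
  rwa [abs_of_nonneg (sub_nonneg.2 htT)] at this

theorem scalarValue_le_inner_vectCost (hhbd : ∀ x, ∀ a ∈ A, ‖h x a‖ ≤ C)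
    (hgbd : ∀ x, ‖g x‖ ≤ C) (lam : EuclideanSpace ℝ (Fin N)) (ht : 0 ≤ t) (htT : t ≤ T)
    (hα : IsAdmissible T A α) (hχ : IsTrajectory T F x t α χ) :
    scalarValue T A F h g lam x t ≤ ⟪lam, vectCost T h g t α χ⟫_ℝ := by
  unfold scalarValue
  refine csInf_le ⟨-(‖lam‖ * (C + C * (T - t))), ?_⟩ ⟨α, χ, hα, hχ, rfl⟩
  rintro _ ⟨β, ξ, hβ, -, rfl⟩
  have := (abs_real_inner_le_norm lam (vectCost T h g t β ξ)).trans
    (mul_le_mul_of_nonneg_left (norm_vectCost_le hhbd hgbd hβ ht htT) (norm_nonneg lam))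
  linarith [neg_abs_le ⟪lam, vectCost T h g t β ξ⟫_ℝ]

theorem exists_inner_vectCost_lt_scalarValue_add
    (hne : ∃ α χ, IsAdmissible T A α ∧ IsTrajectory T F x t α χ)
    (lam : EuclideanSpace ℝ (Fin N)) {η : ℝ} (hη : 0 < η) :
    ∃ α χ, IsAdmissible T A α ∧ IsTrajectory T F x t α χ ∧
      ⟪lam, vectCost T h g t α χ⟫_ℝ < scalarValue T A F h g lam x t + η := by
  obtain ⟨α, χ, hα, hχ⟩ := hne
  by_contra! hge
  have hle : scalarValue T A F h g lam x t + η ≤ scalarValue T A F h g lam x t :=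
    le_csInf ⟨_, α, χ, hα, hχ, rfl⟩ fun _ ⟨β, ξ, hβ, hξ, hr⟩ => hr ▸ hge β ξ hβ hξ
  linarith

theorem scalarValue_le_integral_add_scalarValue (hA : IsClosed A)
    (hFcont : ContinuousOn (fun p => F p.1 p.2) (univ ×ˢ A))
    (hhcont : ContinuousOn (fun p => h p.1 p.2) (univ ×ˢ A))
    (hFbd : ∀ x, ∀ a ∈ A, ‖F x a‖ ≤ C) (hhbd : ∀ x, ∀ a ∈ A, ‖h x a‖ ≤ C)
    (hgbd : ∀ x, ‖g x‖ ≤ C) (hFlip : ∀ x y, ∀ a ∈ A, ‖F x a - F y a‖ ≤ C * ‖x - y‖)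
    (lam : EuclideanSpace ℝ (Fin N)) (ht : 0 ≤ t) (hts : t ≤ s) (hsT : s ≤ T) (ha : a ∈ A)
    (hχ : IsTrajectory T F x t (fun _ => a) χ) :
    scalarValue T A F h g lam x t ≤
      (∫ u in t..s, ⟪lam, h (χ u) a⟫_ℝ) + scalarValue T A F h g lam (χ s) s := by
  refine le_of_forall_pos_le_add fun η hη => ?_
  obtain ⟨χ₁, hχ₁, -⟩ := exists_isTrajectory_const hFbd hFlip ha (χ s) hsT
  obtain ⟨α', χ', hα', hχ', hlt⟩ :=
    exists_inner_vectCost_lt_scalarValue_add (h := h) (g := g) ⟨_, _, isAdmissible_const ha, hχ₁⟩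
      lam hη
  have hconst : IsAdmissible T A (fun _ => a) := isAdmissible_const ha
  have hsub : uIcc t s ⊆ uIcc t T := uIcc_subset_uIcc left_mem_uIcc (mem_uIcc_of_le hts hsT)
  have hs : 0 ≤ s := ht.trans hts
  have hh := (hχ.intervalIntegrable_comp hconst ht (hts.trans hsT) hA hhcont hhbd).mono_set hsub
  calc scalarValue T A F h g lam x t
      ≤ ⟪lam, vectCost T h g t ((Iio s).piecewise (fun _ => a) α') ((Iio s).piecewise χ χ')⟫_ℝ :=
        scalarValue_le_inner_vectCost hhbd hgbd lam ht (hts.trans hsT)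
          (hconst.piecewise_Iio hα') (hχ.piecewise_Iio hχ' hts hsT
            ((hχ.intervalIntegrable_comp hconst ht (hts.trans hsT) hA hFcont hFbd).mono_set hsub)
            (hχ'.intervalIntegrable_comp hα' hs hsT hA hFcont hFbd))
    _ = (∫ u in t..s, ⟪lam, h (χ u) a⟫_ℝ) + ⟪lam, vectCost T h g s α' χ'⟫_ℝ := by
        rw [vectCost_piecewise_Iio hts hsT hh
          (hχ'.intervalIntegrable_comp hα' hs hsT hA hhcont hhbd), inner_add_right]
        congr 1
        exact ((innerSL ℝ lam).intervalIntegral_comp_comm hh).symm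
    _ ≤ (∫ u in t..s, ⟪lam, h (χ u) a⟫_ℝ) + scalarValue T A F h g lam (χ s) s + η := by
        linarith

theorem le_deriv_add_inner_gradient_add_inner (hA : IsClosed A)
    (hFcont : ContinuousOn (fun p => F p.1 p.2) (univ ×ˢ A))
    (hhcont : ContinuousOn (fun p => h p.1 p.2) (univ ×ˢ A))
    (hFbd : ∀ x, ∀ a ∈ A, ‖F x a‖ ≤ C) (hhbd : ∀ x, ∀ a ∈ A, ‖h x a‖ ≤ C)
    (hgbd : ∀ x, ‖g x‖ ≤ C) (hFlip : ∀ x y, ∀ a ∈ A, ‖F x a - F y a‖ ≤ C * ‖x - y‖)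
    (lam : EuclideanSpace ℝ (Fin N)) {ψ : EuclideanSpace ℝ (Fin n) × ℝ → ℝ}
    {x₀ : EuclideanSpace ℝ (Fin n)} {t₀ ε : ℝ} (hψ : DifferentiableAt ℝ ψ (x₀, t₀))
    (ht₀ : t₀ ∈ Ioo 0 T) (hε : 0 < ε)
    (htouch : ∀ p : EuclideanSpace ℝ (Fin n) × ℝ, dist p (x₀, t₀) < ε →
      scalarValue T A F h g lam p.1 p.2 - ψ p ≤ 0)
    (heq : scalarValue T A F h g lam x₀ t₀ - ψ (x₀, t₀) = 0) (ha : a ∈ A) :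
    0 ≤ deriv (fun τ => ψ (x₀, τ)) t₀ +
      (⟪F x₀ a, gradient (fun y => ψ (y, t₀)) x₀⟫_ℝ + ⟪lam, h x₀ a⟫_ℝ) := by
  obtain ⟨ht0, htT⟩ := ht₀
  have ht₀I : t₀ ∈ Icc t₀ T := left_mem_Icc.2 htT.le
  obtain ⟨χ, hχ, hχd⟩ := exists_isTrajectory_const hFbd hFlip ha x₀ htT.le
  have hχt : χ t₀ = x₀ := hχ.apply_left htT.le
  set Φ : ℝ → ℝ := fun s => (∫ u in t₀..s, ⟪lam, h (χ u) a⟫_ℝ) + ψ (χ s, s)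
  have hmin : IsLocalMinOn Φ (Icc t₀ T) t₀ := by
    have hnear : ∀ᶠ s in 𝓝[Icc t₀ T] t₀, dist (χ s, s) (x₀, t₀) < ε := by
      have hγ := ((hχ.1 t₀ ht₀I).prodMk (continuousWithinAt_id (x := t₀))).tendsto
      rw [hχt] at hγ
      exact hγ.eventually (Metric.ball_mem_nhds _ hε)
    filter_upwards [hnear, self_mem_nhdsWithin] with s hs hsI
    calc Φ t₀ = scalarValue T A F h g lam x₀ t₀ := by simp [Φ, hχt, sub_eq_zero.1 heq]
      _ ≤ (∫ u in t₀..s, ⟪lam, h (χ u) a⟫_ℝ) + scalarValue T A F h g lam (χ s) s :=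
        scalarValue_le_integral_add_scalarValue hA hFcont hhcont hFbd hhbd hgbd hFlip lam
          ht0.le hsI.1 hsI.2 ha hχ
      _ ≤ Φ s := add_le_add le_rfl (sub_nonpos.1 (htouch _ hs))
  have hq : ContinuousOn (fun u => ⟪lam, h (χ u) a⟫_ℝ) (Icc t₀ T) :=
    continuousOn_const.inner <| (hhcont.comp_continuous
      (continuous_id.prodMk continuous_const) fun _ => ⟨mem_univ _, ha⟩).comp_continuousOn hχ.1
  have hΦ := hasDerivWithinAt_integral_add_comp_prodMk htT.le hq hχd (hχt ▸ hψ)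
  rw [hχt] at hΦ
  have := hmin.hasDerivWithinAt_Icc_nonneg htT hΦ
  rw [fderiv_apply_eq_inner_gradient_add_deriv hψ] at this
  linarith

end ControlProblem

theorem value_function_viscosity_subsolution_general
    (n m N : ℕ) (T : ℝ)
    (A : Set (EuclideanSpace ℝ (Fin m))) (hAne : A.Nonempty) (hAcpt : IsCompact A)
    (F : EuclideanSpace ℝ (Fin n) → EuclideanSpace ℝ (Fin m) → EuclideanSpace ℝ (Fin n))
    (h : EuclideanSpace ℝ (Fin n) → EuclideanSpace ℝ (Fin m) → EuclideanSpace ℝ (Fin N))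
    (g : EuclideanSpace ℝ (Fin n) → EuclideanSpace ℝ (Fin N))
    (hFcont : ContinuousOn (fun p => F p.1 p.2) (Set.univ ×ˢ A))
    (hhcont : ContinuousOn (fun p => h p.1 p.2) (Set.univ ×ˢ A))
    (C : ℝ)
    (hFbd : ∀ x, ∀ a ∈ A, ‖F x a‖ ≤ C)
    (hhbd : ∀ x, ∀ a ∈ A, ‖h x a‖ ≤ C)
    (hgbd : ∀ x, ‖g x‖ ≤ C)
    (hFlip : ∀ x y, ∀ a ∈ A, ‖F x a - F y a‖ ≤ C * ‖x - y‖)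
    (lam : EuclideanSpace ℝ (Fin N))
    (ψ : EuclideanSpace ℝ (Fin n) × ℝ → ℝ) (hψ : ContDiff ℝ 2 ψ)
    (x₀ : EuclideanSpace ℝ (Fin n)) (t₀ : ℝ) (ht₀ : t₀ ∈ Set.Ioo (0:ℝ) T)
    (ε : ℝ) (hε : 0 < ε)
    (htouch : ∀ p : EuclideanSpace ℝ (Fin n) × ℝ, dist p (x₀, t₀) < ε →
      scalarValue T A F h g lam p.1 p.2 - ψ p ≤ 0)
    (heq : scalarValue T A F h g lam x₀ t₀ - ψ (x₀, t₀) = 0) :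
    0 ≤ deriv (fun τ => ψ (x₀, τ)) t₀ +
        sInf {r : ℝ | ∃ a ∈ A,
          r = ⟪F x₀ a, gradient (fun y => ψ (y, t₀)) x₀⟫_ℝ + ⟪lam, h x₀ a⟫_ℝ} := by
  have hψd : DifferentiableAt ℝ ψ (x₀, t₀) := hψ.differentiable (by norm_num) _
  obtain ⟨a₀, ha₀⟩ := hAne
  rw [← neg_le_iff_add_nonneg']
  refine le_csInf ⟨_, a₀, ha₀, rfl⟩ ?_
  rintro _ ⟨a, ha, rfl⟩
  have := le_deriv_add_inner_gradient_add_inner hAcpt.isClosed hFcont hhcont hFbd hhbd hgbd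
    hFlip lam hψd ht₀ hε htouch heq ha
  linarith

/-- The scalar value function `v^λ` is a viscosity subsolution of
`v_t + H^λ(x, Dv) = 0` in `ℝ^n × (0,T)`, with
`H^λ(x,p) = min_{a ∈ A} {F(x,a)·p + λ·h(x,a)}`: whenever a `C²` test function `ψ`
touches `v^λ` from above at an interior maximum point `(x₀,t₀)` of `v^λ - ψ`, we have
`∂_t ψ(x₀,t₀) + min_{a ∈ A} {F(x₀,a)·D_xψ(x₀,t₀) + λ·h(x₀,a)} ≥ 0`. -/
theorem value_function_viscosity_subsolution
    (n m N : ℕ) (T : ℝ) (hT : 0 < T)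
    (A : Set (EuclideanSpace ℝ (Fin m))) (hAne : A.Nonempty) (hAcpt : IsCompact A)
    (F : EuclideanSpace ℝ (Fin n) → EuclideanSpace ℝ (Fin m) → EuclideanSpace ℝ (Fin n))
    (h : EuclideanSpace ℝ (Fin n) → EuclideanSpace ℝ (Fin m) → EuclideanSpace ℝ (Fin N))
    (g : EuclideanSpace ℝ (Fin n) → EuclideanSpace ℝ (Fin N))
    (hFcont : ContinuousOn (fun p => F p.1 p.2) (Set.univ ×ˢ A))
    (hhcont : ContinuousOn (fun p => h p.1 p.2) (Set.univ ×ˢ A))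
    (hgcont : Continuous g)
    (C : ℝ) (hCpos : 0 < C)
    (hFbd : ∀ x, ∀ a ∈ A, ‖F x a‖ ≤ C)
    (hhbd : ∀ x, ∀ a ∈ A, ‖h x a‖ ≤ C)
    (hgbd : ∀ x, ‖g x‖ ≤ C)
    (hFlip : ∀ x y, ∀ a ∈ A, ‖F x a - F y a‖ ≤ C * ‖x - y‖)
    (hhlip : ∀ x y, ∀ a ∈ A, ‖h x a - h y a‖ ≤ C * ‖x - y‖)
    (hglip : ∀ x y, ‖g x - g y‖ ≤ C * ‖x - y‖)
    (lam : EuclideanSpace ℝ (Fin N))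
    (ψ : EuclideanSpace ℝ (Fin n) × ℝ → ℝ) (hψ : ContDiff ℝ 2 ψ)
    (x₀ : EuclideanSpace ℝ (Fin n)) (t₀ : ℝ) (ht₀ : t₀ ∈ Set.Ioo (0:ℝ) T)
    (ε : ℝ) (hε : 0 < ε)
    (htouch : ∀ p : EuclideanSpace ℝ (Fin n) × ℝ, dist p (x₀, t₀) < ε →
      scalarValue T A F h g lam p.1 p.2 - ψ p ≤ 0)
    (heq : scalarValue T A F h g lam x₀ t₀ - ψ (x₀, t₀) = 0) :
    0 ≤ deriv (fun τ => ψ (x₀, τ)) t₀ +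
        sInf {r : ℝ | ∃ a ∈ A,
          r = ⟪F x₀ a, gradient (fun y => ψ (y, t₀)) x₀⟫_ℝ + ⟪lam, h x₀ a⟫_ℝ} :=
  value_function_viscosity_subsolution_general n m N T A hAne hAcpt F h g hFcont hhcont C hFbd hhbd
    hgbd hFlip lam ψ hψ x₀ t₀ ht₀ ε hε htouch heq
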